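/- arXiv:2212.03509 — 3 statements merged into one kernel-verified Lean document; each statement's English description precedes it below -/
import Mathlib

section
/- Let 0 < θ ≤ p ≤ ∞, α = (α_1, α_2) ∈ ℝ², σ_2 ≥ p, and σ = (σ_1 = θ(p/θ)', σ_2). If a p-admissible weight sequence {t_k}_{k∈ℤ} belongs to the class Ẋ_{α,σ,p}, then α_2 ≥ α_1. -/
open MeasureTheory ENNReal

noncomputable section

namespace GeneralWeights

/-- A cube in `ℝ^n` with sides parallel to the coordinate axes. -/
def IsCube {n : ℕ} (Q : Set (Fin n → ℝ)) : Prop :=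
  ∃ (a : Fin n → ℝ) (h : ℝ), 0 < h ∧ Q = {x | ∀ i, a i ≤ x i ∧ x i < a i + h}

/-- The dyadic cube `Q_{v,m} = 2^{-v}([0,1)^n + m)`. -/
def DyadicCube {n : ℕ} (v : ℤ) (m : Fin n → ℤ) : Set (Fin n → ℝ) :=
  {x | ∀ i, (m i : ℝ) * 2 ^ (-v) ≤ x i ∧ x i < ((m i : ℝ) + 1) * 2 ^ (-v)}

/-- `M_{Q,r}(f) = (|Q|⁻¹ ∫_Q |f|^r)^{1/r}` (with the essential supremum if `r = ∞`). -/
def MQ {n : ℕ} (r : ℝ≥0∞) (Q : Set (Fin n → ℝ)) (f : (Fin n → ℝ) → ℝ) : ℝ≥0∞ :=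
  if r = ∞ then essSup (fun x => ENNReal.ofReal |f x|) (volume.restrict Q)
  else ((volume Q)⁻¹ * ∫⁻ x in Q, ENNReal.ofReal |f x| ^ r.toReal) ^ (1 / r.toReal)

/-- The `L_p` (quasi-)norm of `f` on the set `Q` (no averaging). -/
def LpOn {n : ℕ} (p : ℝ≥0∞) (Q : Set (Fin n → ℝ)) (f : (Fin n → ℝ) → ℝ) : ℝ≥0∞ :=
  if p = ∞ then essSup (fun x => ENNReal.ofReal |f x|) (volume.restrict Q)
  else (∫⁻ x in Q, ENNReal.ofReal |f x| ^ p.toReal) ^ (1 / p.toReal)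

/-- A weight: a nonnegative locally integrable function, positive a.e. -/
def IsWeight {n : ℕ} (γ : (Fin n → ℝ) → ℝ) : Prop :=
  MeasureTheory.LocallyIntegrable γ volume ∧ (∀ x, 0 ≤ γ x) ∧
    ∀ᵐ x ∂(volume : Measure (Fin n → ℝ)), 0 < γ x

/-- The set of admissible Muckenhoupt `A_p` constants of a weight `γ`
(for `p = 1` via the `A_1` condition, for `p > 1` via the `A_p` condition;
note `p'/p = 1/(p-1)`). -/
def apConstSet {n : ℕ} (p : ℝ) (γ : (Fin n → ℝ) → ℝ) : Set ℝ :=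
  if p = 1 then
    {C | 0 < C ∧ ∀ Q : Set (Fin n → ℝ), IsCube Q →
      ∀ᵐ y ∂(volume.restrict Q), MQ 1 Q γ ≤ ENNReal.ofReal (C * γ y)}
  else
    {C | 0 < C ∧ ∀ Q : Set (Fin n → ℝ), IsCube Q →
      MQ 1 Q γ * MQ (ENNReal.ofReal (1 / (p - 1))) Q (fun x => (γ x)⁻¹) ≤ ENNReal.ofReal C}

/-- `γ ∈ A_p(ℝ^n)`. -/
def Muckenhoupt {n : ℕ} (p : ℝ) (γ : (Fin n → ℝ) → ℝ) : Prop :=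
  (apConstSet p γ).Nonempty

/-- The Muckenhoupt constant `A_p(γ)`: the smallest admissible constant. -/
def apConst {n : ℕ} (p : ℝ) (γ : (Fin n → ℝ) → ℝ) : ℝ :=
  sInf (apConstSet p γ)

/-- The Hardy–Littlewood maximal operator (over cubes with sides parallel to the axes). -/
def HL {n : ℕ} (f : (Fin n → ℝ) → ℝ) (x : Fin n → ℝ) : ℝ≥0∞ :=
  ⨆ (Q : Set (Fin n → ℝ)) (_ : IsCube Q) (_ : x ∈ Q),
    (volume Q)⁻¹ * ∫⁻ y in Q, ENNReal.ofReal |f y|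

/-- The `ℓ_q` norm of a family of values in `ℝ≥0∞`, with the usual modification at `q = ∞`. -/
def ellq {ι : Type*} (q : ℝ≥0∞) (g : ι → ℝ≥0∞) : ℝ≥0∞ :=
  if q = ∞ then ⨆ i, g i else (∑' i, g i ^ q.toReal) ^ (1 / q.toReal)

/-- The `L_p` (quasi-)norm on `ℝ^n` of an `ℝ≥0∞`-valued function, `0 < p < ∞`. -/
def nLp {n : ℕ} (p : ℝ) (g : (Fin n → ℝ) → ℝ≥0∞) : ℝ≥0∞ :=
  (∫⁻ x, g x ^ p) ^ (1 / p)

/-- The `L_p` (quasi-)norm on `ℝ^n` of an `ℝ≥0∞`-valued function, `0 < p ≤ ∞`. -/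
def nLpE {n : ℕ} (p : ℝ≥0∞) (g : (Fin n → ℝ) → ℝ≥0∞) : ℝ≥0∞ :=
  if p = ∞ then essSup g (volume : Measure (Fin n → ℝ))
  else (∫⁻ x, g x ^ p.toReal) ^ (1 / p.toReal)

/-- The conjugate exponent, for exponents in `ℝ≥0∞`. -/
def conjE (s : ℝ≥0∞) : ℝ≥0∞ :=
  if s = 1 then ∞ else if s = ∞ then 1 else ENNReal.ofReal (s.toReal / (s.toReal - 1))

/-- `σ₁ = θ·(p/θ)'`. -/
def sigma1 (θ p : ℝ≥0∞) : ℝ≥0∞ := θ * conjE (p / θ)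

/-- A `p`-admissible weight sequence: each `t_k` belongs to `L_p^loc(ℝ^n)`. -/
def PAdmissible {n : ℕ} (p : ℝ≥0∞) (t : ℤ → (Fin n → ℝ) → ℝ) : Prop :=
  ∀ k : ℤ, ∀ K : Set (Fin n → ℝ), IsCompact K → LpOn p K (t k) < ∞

/-- Condition (2.1): `M_{Q,p}(t_k) · M_{Q,σ₁}(t_j⁻¹) ≤ C₁ 2^{α₁(k-j)}` for `k ≤ j`. -/
def Cond21 {n : ℕ} (α₁ : ℝ) (σ₁ p : ℝ≥0∞) (t : ℤ → (Fin n → ℝ) → ℝ) : Prop :=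
  ∃ C : ℝ, 0 < C ∧ ∀ k j : ℤ, k ≤ j → ∀ Q : Set (Fin n → ℝ), IsCube Q →
    MQ p Q (t k) * MQ σ₁ Q (fun x => (t j x)⁻¹) ≤
      ENNReal.ofReal (C * 2 ^ (α₁ * ((k : ℝ) - (j : ℝ))))

/-- Condition (2.2): `(M_{Q,p}(t_k))⁻¹ · M_{Q,σ₂}(t_j) ≤ C₂ 2^{α₂(j-k)}` for `k ≤ j`,
written multiplicatively. -/
def Cond22 {n : ℕ} (α₂ : ℝ) (σ₂ p : ℝ≥0∞) (t : ℤ → (Fin n → ℝ) → ℝ) : Prop :=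
  ∃ C : ℝ, 0 < C ∧ ∀ k j : ℤ, k ≤ j → ∀ Q : Set (Fin n → ℝ), IsCube Q →
    MQ σ₂ Q (t j) ≤
      ENNReal.ofReal (C * 2 ^ (α₂ * ((j : ℝ) - (k : ℝ)))) * MQ p Q (t k)

/-- The class `Ẋ_{α,σ,p}`. -/
def Xdot {n : ℕ} (α₁ α₂ : ℝ) (σ₁ σ₂ p : ℝ≥0∞) (t : ℤ → (Fin n → ℝ) → ℝ) : Prop :=
  Cond21 α₁ σ₁ p t ∧ Cond22 α₂ σ₂ p t

lemma MQ_pos {n : ℕ} (r : ℝ≥0∞) (Q : Set (Fin n → ℝ)) (hQ0 : volume Q ≠ 0)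
    (hQt : volume Q ≠ ∞) (f : (Fin n → ℝ) → ℝ)
    (hf : AEMeasurable f (volume.restrict Q))
    (hpos : ∀ᵐ x ∂(volume.restrict Q), 0 < f x) : 0 < MQ r Q f := by
  have hne : (volume.restrict Q : Measure (Fin n → ℝ)) ≠ 0 := by
    simpa [Measure.restrict_eq_zero] using hQ0
  haveI : (ae (volume.restrict Q)).NeBot := ae_neBot.mpr hne
  rcases eq_or_ne r ∞ with hr | hr
  · rw [MQ, if_pos hr, pos_iff_ne_zero]
    intro h0
    have hub := _root_.ae_le_essSup (μ := volume.restrict Q) (f := fun x => ENNReal.ofReal |f x|)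
    rw [h0] at hub
    obtain ⟨x, hx1, hx2⟩ := (hub.and hpos).exists
    exact (ENNReal.ofReal_pos.mpr (abs_pos.mpr hx2.ne')).not_ge hx1
  · rw [MQ, if_neg hr]
    rcases eq_or_ne r 0 with hr0 | hr0
    · simp [hr0]
    have hc : 0 < r.toReal := ENNReal.toReal_pos hr0 hr
    rw [pos_iff_ne_zero, Ne, ENNReal.rpow_eq_zero_iff]
    rintro (⟨hbase, -⟩ | ⟨-, hlt⟩)
    · have hI : ∫⁻ x in Q, ENNReal.ofReal |f x| ^ r.toReal = 0 := by
        rcases mul_eq_zero.mp hbase with h | h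
        · exact absurd h (ENNReal.inv_ne_zero.mpr hQt)
        · exact h
      have hmeas : AEMeasurable (fun x => ENNReal.ofReal |f x| ^ r.toReal)
          (volume.restrict Q) :=
        (ENNReal.measurable_ofReal.comp_aemeasurable (measurable_abs.comp_aemeasurable hf)).pow_const r.toReal
      rw [lintegral_eq_zero_iff' hmeas] at hI
      obtain ⟨x, hx1, hx2⟩ := (hI.and hpos).exists
      exact (ENNReal.rpow_pos (ENNReal.ofReal_pos.mpr (abs_pos.mpr hx2.ne'))
        ENNReal.ofReal_ne_top).ne' hx1
    · exact absurd hlt (not_lt.mpr (by positivity))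

/-- If `0 < θ ≤ p ≤ ∞`, `σ₂ ≥ p`, `σ₁ = θ(p/θ)'` and a `p`-admissible
weight sequence `{t_k}` belongs to `Ẋ_{α,σ,p}`, then `α₂ ≥ α₁`. -/
theorem statement13 {n : ℕ} (θ p σ₂ : ℝ≥0∞) (α₁ α₂ : ℝ)
    (hθ : 0 < θ) (hθp : θ ≤ p) (hσ₂ : p ≤ σ₂)
    (t : ℤ → (Fin n → ℝ) → ℝ) (hw : ∀ k, IsWeight (t k))
    (hadm : PAdmissible p t)
    (hX : Xdot α₁ α₂ (sigma1 θ p) σ₂ p t) :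
    α₁ ≤ α₂ := by
  by_contra hcon
  push_neg at hcon
  -- the unit cube
  set Q : Set (Fin n → ℝ) := Set.univ.pi (fun _ => Set.Ico (0:ℝ) 1) with hQdef
  have hQcube : IsCube Q := by
    refine ⟨0, 1, one_pos, ?_⟩
    ext x
    simp [hQdef, Set.mem_pi]
  have hQvol : volume Q = 1 := by
    rw [hQdef, volume_pi_pi]
    simp
  have hQ0 : volume Q ≠ 0 := by rw [hQvol]; exact one_ne_zero
  have hQt : volume Q ≠ ∞ := by rw [hQvol]; exact ENNReal.one_ne_top
  -- positivity of the two averages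
  have hmeas : AEMeasurable (t 0) (volume.restrict Q) :=
    ((hw 0).1.aestronglyMeasurable.aemeasurable).restrict
  have hposae : ∀ᵐ x ∂(volume.restrict Q), 0 < t 0 x := ae_restrict_of_ae (hw 0).2.2
  have hA : 0 < MQ σ₂ Q (t 0) := MQ_pos _ _ hQ0 hQt _ hmeas hposae
  have hB : 0 < MQ (sigma1 θ p) Q (fun x => (t 0 x)⁻¹) := by
    refine MQ_pos _ _ hQ0 hQt _ hmeas.inv ?_
    exact hposae.mono fun x hx => inv_pos.mpr hx
  obtain ⟨⟨C₁, hC₁, h21⟩, ⟨C₂, hC₂, h22⟩⟩ := hX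
  set r : ℝ := 2 ^ (α₂ - α₁) with hrdef
  have hr0 : 0 ≤ r := (Real.rpow_pos_of_pos two_pos _).le
  have hr1 : r < 1 := Real.rpow_lt_one_of_one_lt_of_neg one_lt_two (by linarith)
  -- key estimate
  have key : ∀ N : ℕ, MQ σ₂ Q (t 0) * MQ (sigma1 θ p) Q (fun x => (t 0 x)⁻¹) ≤
      ENNReal.ofReal (C₂ * C₁ * r ^ N) := by
    intro N
    have hk : (-(N:ℤ)) ≤ (0:ℤ) := by exact_mod_cast neg_nonpos.mpr (Int.ofNat_nonneg N)
    have h1 := h21 (-(N:ℤ)) 0 hk Q hQcube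
    have h2 := h22 (-(N:ℤ)) 0 hk Q hQcube
    push_cast at h1 h2
    have step : MQ σ₂ Q (t 0) * MQ (sigma1 θ p) Q (fun x => (t 0 x)⁻¹) ≤
        ENNReal.ofReal (C₂ * 2 ^ (α₂ * ((0:ℝ) - (-(N:ℝ)))))
          * ENNReal.ofReal (C₁ * 2 ^ (α₁ * ((-(N:ℝ)) - (0:ℝ)))) :=
      (mul_le_mul_left h2 _).trans
        ((mul_assoc _ _ _).le.trans (mul_le_mul_right h1 _))
    refine step.trans (le_of_eq ?_)
    rw [← ENNReal.ofReal_mul (by positivity)]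
    congr 1
    push_cast
    rw [hrdef, ← Real.rpow_natCast ((2:ℝ) ^ (α₂ - α₁)) N, ← Real.rpow_mul (le_of_lt two_pos),
      show (α₂ - α₁) * (N:ℝ) = α₂ * ((0:ℝ) - -(N:ℝ)) + α₁ * (-(N:ℝ) - 0) by ring,
      Real.rpow_add two_pos]
    ring
  -- pass to the limit
  have hlim : Filter.Tendsto (fun N : ℕ => ENNReal.ofReal (C₂ * C₁ * r ^ N))
      Filter.atTop (nhds 0) := by
    have h0 : Filter.Tendsto (fun N : ℕ => C₂ * C₁ * r ^ N) Filter.atTop (nhds 0) := by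
      simpa using (tendsto_pow_atTop_nhds_zero_of_lt_one hr0 hr1).const_mul (C₂ * C₁)
    simpa using (ENNReal.tendsto_ofReal h0)
  have hle := ge_of_tendsto' hlim key
  exact ((ENNReal.mul_pos hA.ne' hB.ne').ne' (le_antisymm hle zero_le))

end GeneralWeights
end
end

section
/- Let 0 < r < p < ∞ and σ_1 = r(p/r)'. If a p-admissible weight sequence {t_k}_{k∈ℤ} satisfies condition (2.1) with this σ_1 and some α_1 ∈ ℝ, i.e. M_{Q,p}(t_k) · M_{Q,σ_1}(t_j^{-1}) ≤ C_1 2^{α_1(k−j)} for all k ≤ j and every cube Q, then t_k^p belongs to the Muckenhoupt class A_{p/r}(ℝ^n) for every k ∈ ℤ. -/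
open MeasureTheory ENNReal

noncomputable section

namespace GeneralWeights

lemma MQ_rpow {n : ℕ} (Q : Set (Fin n → ℝ)) (f : (Fin n → ℝ) → ℝ) (hf : ∀ x, 0 ≤ f x)
    {p a : ℝ} (hp : 0 < p) (ha : 0 < a) :
    MQ (ENNReal.ofReal a) Q (fun x => f x ^ p) = (MQ (ENNReal.ofReal (p * a)) Q f) ^ p := by
  have hpa : 0 < p * a := mul_pos hp ha
  rw [MQ, MQ, if_neg ENNReal.ofReal_ne_top, if_neg ENNReal.ofReal_ne_top,
    ENNReal.toReal_ofReal ha.le, ENNReal.toReal_ofReal hpa.le]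
  have hint : ∀ x, ENNReal.ofReal |f x ^ p| ^ a = ENNReal.ofReal |f x| ^ (p * a) := by
    intro x
    rw [abs_of_nonneg (Real.rpow_nonneg (hf x) p), abs_of_nonneg (hf x),
      ← ENNReal.ofReal_rpow_of_nonneg (hf x) hp.le, ← ENNReal.rpow_mul]
  simp only [hint]
  rw [← ENNReal.rpow_mul]
  congr 1
  field_simp

lemma sigma1_eq {r p : ℝ} (hr : 0 < r) (hrp : r < p) :
    sigma1 (ENNReal.ofReal r) (ENNReal.ofReal p) = ENNReal.ofReal (p * r / (p - r)) := by
  have hp : 0 < p := hr.trans hrp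
  have hq1 : 1 < p / r := (one_lt_div hr).mpr hrp
  rw [sigma1, ← ENNReal.ofReal_div_of_pos hr, conjE, if_neg, if_neg ENNReal.ofReal_ne_top,
    ENNReal.toReal_ofReal (by positivity), ← ENNReal.ofReal_mul hr.le]
  · congr 1
    have hpr : p - r ≠ 0 := by linarith
    field_simp
  · rw [ENNReal.ofReal_eq_one]
    exact hq1.ne'

/-- If `0 < r < p < ∞` and a `p`-admissible weight sequence `{t_k}`
satisfies condition (2.1) with `σ₁ = r(p/r)'`, then `t_k^p ∈ A_{p/r}(ℝ^n)` for all `k`. -/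
theorem statement14 {n : ℕ} (r p α₁ : ℝ) (hr : 0 < r) (hrp : r < p)
    (t : ℤ → (Fin n → ℝ) → ℝ) (hw : ∀ k, IsWeight (t k))
    (hadm : PAdmissible (ENNReal.ofReal p) t)
    (h21 : Cond21 α₁ (sigma1 (ENNReal.ofReal r) (ENNReal.ofReal p)) (ENNReal.ofReal p) t) :
    ∀ k : ℤ, Muckenhoupt (p / r) (fun x => t k x ^ p) := by
  obtain ⟨C, hC, hCond⟩ := h21
  intro k
  have hp : 0 < p := hr.trans hrp
  have hq1 : 1 < p / r := (one_lt_div hr).mpr hrp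
  have hpr : (0:ℝ) < p - r := by linarith
  refine ⟨C ^ p, ?_⟩
  rw [apConstSet, if_neg hq1.ne']
  refine ⟨Real.rpow_pos_of_pos hC p, fun Q hQ => ?_⟩
  have key := hCond k k le_rfl Q hQ
  simp only [sub_self, mul_zero, Real.rpow_zero, mul_one] at key
  -- rewrite the first factor
  have h1 : MQ 1 Q (fun x => t k x ^ p) = (MQ (ENNReal.ofReal p) Q (t k)) ^ p := by
    have := MQ_rpow Q (t k) (hw k).2.1 hp one_pos
    rwa [ENNReal.ofReal_one, mul_one] at this
  -- rewrite the second factor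
  have h2 : MQ (ENNReal.ofReal (1 / (p / r - 1))) Q (fun x => (t k x ^ p)⁻¹)
      = (MQ (sigma1 (ENNReal.ofReal r) (ENNReal.ofReal p)) Q (fun x => (t k x)⁻¹)) ^ p := by
    have hfun : (fun x => (t k x ^ p)⁻¹) = fun x => ((t k x)⁻¹) ^ p := by
      funext x
      rw [← Real.inv_rpow ((hw k).2.1 x)]
    have ha : 0 < 1 / (p / r - 1) := one_div_pos.mpr (sub_pos.mpr hq1)
    rw [hfun, MQ_rpow Q (fun x => (t k x)⁻¹) (fun x => inv_nonneg.mpr ((hw k).2.1 x)) hp ha,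
      sigma1_eq hr hrp]
    congr 3
    have hr0 : r ≠ 0 := hr.ne'
    have hpr0 : p - r ≠ 0 := hpr.ne'
    field_simp
  rw [h1, h2, ← ENNReal.mul_rpow_of_nonneg _ _ hp.le,
    ← ENNReal.ofReal_rpow_of_nonneg hC.le hp.le]
  exact ENNReal.rpow_le_rpow key hp.le

end GeneralWeights
end
end

section
/- Let 0 < θ, max(1, θ) < p < ∞ and σ_1 = θ(p/θ)'. Let t_1 be a weight with t_1^p ∈ A_{p/θ}(ℝ^n). Then L_p(ℝ^n) = L_p(ℝ^n, t_1) with equivalent norms (i.e. there are constants c_1, c_2 > 0 with c_1 ‖f | L_p(ℝ^n)‖ ≤ ‖f t_1 | L_p(ℝ^n)‖ ≤ c_2 ‖f | L_p(ℝ^n)‖ for all measurable f), if and only if M_{Q,σ_1}(t_1^{-1}) ≈ M_{Q,p}(t_1) ≈ 1 holds with implicit constants independent of Q, for every dyadic cube Q of ℝ^n. -/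
open MeasureTheory ENNReal

noncomputable section

namespace GeneralWeights

section Aux
variable {n : ℕ}

lemma dyadic_eq_pi (v : ℤ) (m : Fin n → ℤ) :
    DyadicCube v m =
      Set.univ.pi fun i => Set.Ico ((m i : ℝ) * 2 ^ (-v)) (((m i : ℝ) + 1) * 2 ^ (-v)) := by
  ext x; simp [DyadicCube, Set.mem_pi, Set.mem_Ico]

lemma measurableSet_dyadic (v : ℤ) (m : Fin n → ℤ) : MeasurableSet (DyadicCube v m) := by
  rw [dyadic_eq_pi]
  exact MeasurableSet.univ_pi fun i => measurableSet_Ico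

lemma volume_dyadic (v : ℤ) (m : Fin n → ℤ) :
    volume (DyadicCube v m) = ENNReal.ofReal ((2:ℝ) ^ (-v)) ^ n := by
  rw [dyadic_eq_pi, volume_pi_pi]
  have h : ∀ i : Fin n, volume (Set.Ico ((m i : ℝ) * 2 ^ (-v)) (((m i : ℝ) + 1) * 2 ^ (-v)))
      = ENNReal.ofReal ((2:ℝ) ^ (-v)) := by
    intro i; rw [Real.volume_Ico]; congr 1; ring
  rw [Finset.prod_congr rfl fun i _ => h i, Finset.prod_const, Finset.card_univ,
    Fintype.card_fin]

lemma volume_dyadic_pos (v : ℤ) (m : Fin n → ℤ) : 0 < volume (DyadicCube v m) := by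
  rw [volume_dyadic]
  positivity

lemma volume_dyadic_ne_top (v : ℤ) (m : Fin n → ℤ) : volume (DyadicCube v m) ≠ ∞ := by
  rw [volume_dyadic]
  exact ENNReal.pow_ne_top ENNReal.ofReal_ne_top

end Aux

section MQlemmas
variable {n : ℕ} {r : ℝ≥0∞} {Q : Set (Fin n → ℝ)} {h : (Fin n → ℝ) → ℝ}

lemma MQ_eq (hr : r ≠ ∞) (Q : Set (Fin n → ℝ)) (h : (Fin n → ℝ) → ℝ) :
    MQ r Q h = ((volume Q)⁻¹ * ∫⁻ x in Q, ENNReal.ofReal |h x| ^ r.toReal) ^ (1 / r.toReal) :=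
  if_neg hr

lemma MQ_le_of_ae_le (hr : r ≠ ∞) (hr0 : 0 < r.toReal)
    (hQ0 : volume Q ≠ 0) (hQt : volume Q ≠ ∞) {b : ℝ}
    (hab : ∀ᵐ x ∂(volume : Measure (Fin n → ℝ)), |h x| ≤ b) :
    MQ r Q h ≤ ENNReal.ofReal b := by
  rw [MQ_eq hr]
  have hb : 0 ≤ b := by
    have : (volume : Measure (Fin n → ℝ)) ≠ 0 := by
      intro h0
      simp [h0] at hQ0
    obtain ⟨x, hx⟩ := hab.exists
    exact (abs_nonneg _).trans hx
  have hI : (∫⁻ x in Q, ENNReal.ofReal |h x| ^ r.toReal) ≤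
      ENNReal.ofReal b ^ r.toReal * volume Q := by
    calc (∫⁻ x in Q, ENNReal.ofReal |h x| ^ r.toReal)
        ≤ ∫⁻ _ in Q, ENNReal.ofReal b ^ r.toReal := by
          refine lintegral_mono_ae (ae_restrict_of_ae ?_)
          filter_upwards [hab] with x hx
          exact ENNReal.rpow_le_rpow (ENNReal.ofReal_le_ofReal hx) hr0.le
      _ = ENNReal.ofReal b ^ r.toReal * volume Q := by
          rw [setLIntegral_const]
  have : (volume Q)⁻¹ * (∫⁻ x in Q, ENNReal.ofReal |h x| ^ r.toReal) ≤
      ENNReal.ofReal b ^ r.toReal := by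
    calc (volume Q)⁻¹ * (∫⁻ x in Q, ENNReal.ofReal |h x| ^ r.toReal)
        ≤ (volume Q)⁻¹ * (ENNReal.ofReal b ^ r.toReal * volume Q) :=
          mul_le_mul_right hI _
      _ = ENNReal.ofReal b ^ r.toReal * ((volume Q)⁻¹ * volume Q) := by ring
      _ = ENNReal.ofReal b ^ r.toReal := by
          rw [ENNReal.inv_mul_cancel hQ0 hQt, mul_one]
  calc ((volume Q)⁻¹ * ∫⁻ x in Q, ENNReal.ofReal |h x| ^ r.toReal) ^ (1 / r.toReal)
      ≤ (ENNReal.ofReal b ^ r.toReal) ^ (1 / r.toReal) :=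
        ENNReal.rpow_le_rpow this (by positivity)
    _ = ENNReal.ofReal b := by
        rw [← ENNReal.rpow_mul, mul_one_div, div_self hr0.ne', ENNReal.rpow_one]

lemma le_MQ_of_ae_le (hr : r ≠ ∞) (hr0 : 0 < r.toReal)
    (hQ0 : volume Q ≠ 0) (hQt : volume Q ≠ ∞) {a : ℝ} (ha : 0 ≤ a)
    (hab : ∀ᵐ x ∂(volume : Measure (Fin n → ℝ)), a ≤ |h x|) :
    ENNReal.ofReal a ≤ MQ r Q h := by
  rw [MQ_eq hr]
  have hI : ENNReal.ofReal a ^ r.toReal * volume Q ≤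
      (∫⁻ x in Q, ENNReal.ofReal |h x| ^ r.toReal) := by
    calc ENNReal.ofReal a ^ r.toReal * volume Q
        = ∫⁻ _ in Q, ENNReal.ofReal a ^ r.toReal := by rw [setLIntegral_const]
      _ ≤ ∫⁻ x in Q, ENNReal.ofReal |h x| ^ r.toReal := by
          refine lintegral_mono_ae (ae_restrict_of_ae ?_)
          filter_upwards [hab] with x hx
          exact ENNReal.rpow_le_rpow (ENNReal.ofReal_le_ofReal hx) hr0.le
  have : ENNReal.ofReal a ^ r.toReal ≤
      (volume Q)⁻¹ * (∫⁻ x in Q, ENNReal.ofReal |h x| ^ r.toReal) := by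
    calc ENNReal.ofReal a ^ r.toReal
        = ENNReal.ofReal a ^ r.toReal * (volume Q * (volume Q)⁻¹) := by
          rw [ENNReal.mul_inv_cancel hQ0 hQt, mul_one]
      _ = (volume Q)⁻¹ * (ENNReal.ofReal a ^ r.toReal * volume Q) := by ring
      _ ≤ (volume Q)⁻¹ * (∫⁻ x in Q, ENNReal.ofReal |h x| ^ r.toReal) :=
          mul_le_mul_right hI _
  calc ENNReal.ofReal a
      = (ENNReal.ofReal a ^ r.toReal) ^ (1 / r.toReal) := by
        rw [← ENNReal.rpow_mul, mul_one_div, div_self hr0.ne', ENNReal.rpow_one]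
    _ ≤ ((volume Q)⁻¹ * ∫⁻ x in Q, ENNReal.ofReal |h x| ^ r.toReal) ^ (1 / r.toReal) :=
        ENNReal.rpow_le_rpow this (by positivity)

lemma lintegral_le_of_MQ_le (hr : r ≠ ∞) (hr0 : 0 < r.toReal)
    (hQ0 : volume Q ≠ 0) (hQt : volume Q ≠ ∞) {C : ℝ}
    (hMQ : MQ r Q h ≤ ENNReal.ofReal C) :
    (∫⁻ x in Q, ENNReal.ofReal |h x| ^ r.toReal) ≤ ENNReal.ofReal C ^ r.toReal * volume Q := by
  rw [MQ_eq hr] at hMQ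
  set I := ∫⁻ x in Q, ENNReal.ofReal |h x| ^ r.toReal with hIdef
  have h1 : (volume Q)⁻¹ * I ≤ ENNReal.ofReal C ^ r.toReal := by
    have := ENNReal.rpow_le_rpow hMQ hr0.le
    rwa [← ENNReal.rpow_mul, one_div, inv_mul_cancel₀ hr0.ne', ENNReal.rpow_one] at this
  calc I = volume Q * ((volume Q)⁻¹ * I) := by
        rw [← mul_assoc, ENNReal.mul_inv_cancel hQ0 hQt, one_mul]
    _ ≤ volume Q * (ENNReal.ofReal C ^ r.toReal) := mul_le_mul_right h1 _
    _ = ENNReal.ofReal C ^ r.toReal * volume Q := mul_comm _ _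

end MQlemmas

section nLpLemmas
variable {n : ℕ}

lemma nLp_mono {p : ℝ} (hp : 0 < p) {g₁ g₂ : (Fin n → ℝ) → ℝ≥0∞}
    (h : ∀ᵐ x ∂(volume : Measure (Fin n → ℝ)), g₁ x ≤ g₂ x) : nLp p g₁ ≤ nLp p g₂ := by
  unfold nLp
  refine ENNReal.rpow_le_rpow ?_ (by positivity)
  refine lintegral_mono_ae ?_
  filter_upwards [h] with x hx
  exact ENNReal.rpow_le_rpow hx (by positivity)

lemma nLp_const_mul {p : ℝ} (hp : 0 < p) (c : ℝ≥0∞) (hc : c ≠ ∞) (g : (Fin n → ℝ) → ℝ≥0∞) :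
    nLp p (fun x => c * g x) = c * nLp p g := by
  unfold nLp
  have h1 : ∀ x, (c * g x) ^ p = c ^ p * g x ^ p := fun x =>
    ENNReal.mul_rpow_of_nonneg _ _ hp.le
  simp only [h1]
  rw [lintegral_const_mul' _ _ (by simp [ENNReal.rpow_eq_top_iff, hc, hp, hp.not_gt]),
    ENNReal.mul_rpow_of_nonneg _ _ (by positivity), ← ENNReal.rpow_mul, mul_one_div,
    div_self hp.ne', ENNReal.rpow_one]

lemma nLp_indicator {p : ℝ} (hp : 0 < p) {S : Set (Fin n → ℝ)} (hS : MeasurableSet S) :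
    nLp p (fun x => ENNReal.ofReal |S.indicator (fun _ => (1:ℝ)) x|) =
      volume S ^ (1 / p) := by
  unfold nLp
  congr 1
  have h1 : ∀ x, ENNReal.ofReal |S.indicator (fun _ => (1:ℝ)) x| ^ p
      = S.indicator (fun _ => (1:ℝ≥0∞)) x := by
    intro x
    by_cases hx : x ∈ S
    · simp [Set.indicator_of_mem hx]
    · simp [Set.indicator_of_notMem hx, ENNReal.zero_rpow_of_pos hp]
  simp only [h1]
  rw [lintegral_indicator hS]
  simp

end nLpLemmas

section NormEquiv
variable {n : ℕ}

lemma norm_equiv_of_ae_bounds {p a b : ℝ} (hp : 0 < p) {t₁ : (Fin n → ℝ) → ℝ}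
    (ha : 0 ≤ a)
    (hbd : ∀ᵐ x ∂(volume : Measure (Fin n → ℝ)), a ≤ t₁ x ∧ t₁ x ≤ b) :
    ∀ f : (Fin n → ℝ) → ℝ,
      ENNReal.ofReal a * nLp p (fun x => ENNReal.ofReal |f x|) ≤
          nLp p (fun x => ENNReal.ofReal (|f x| * t₁ x)) ∧
        nLp p (fun x => ENNReal.ofReal (|f x| * t₁ x)) ≤
          ENNReal.ofReal b * nLp p (fun x => ENNReal.ofReal |f x|) := by
  intro f
  constructor
  · rw [← nLp_const_mul hp _ ENNReal.ofReal_ne_top]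
    apply nLp_mono hp
    filter_upwards [hbd] with x hx
    rw [← ENNReal.ofReal_mul ha]
    refine ENNReal.ofReal_le_ofReal ?_
    nlinarith [abs_nonneg (f x), hx.1]
  · rw [← nLp_const_mul hp _ ENNReal.ofReal_ne_top]
    apply nLp_mono hp
    filter_upwards [hbd] with x hx
    have hb : 0 ≤ b := le_trans (le_trans ha hx.1) hx.2
    rw [← ENNReal.ofReal_mul hb]
    refine ENNReal.ofReal_le_ofReal ?_
    nlinarith [abs_nonneg (f x), hx.2]

lemma ae_bounds_of_norm_equiv {p : ℝ} (hp : 0 < p) {t₁ : (Fin n → ℝ) → ℝ}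
    (hmeas : AEMeasurable t₁ (volume : Measure (Fin n → ℝ)))
    (hpos : ∀ᵐ x ∂(volume : Measure (Fin n → ℝ)), 0 < t₁ x)
    {c₁ c₂ : ℝ} (hc₁ : 0 < c₁) (hc₂ : 0 < c₂)
    (H : ∀ f : (Fin n → ℝ) → ℝ,
        ENNReal.ofReal c₁ * nLp p (fun x => ENNReal.ofReal |f x|) ≤
            nLp p (fun x => ENNReal.ofReal (|f x| * t₁ x)) ∧
          nLp p (fun x => ENNReal.ofReal (|f x| * t₁ x)) ≤
            ENNReal.ofReal c₂ * nLp p (fun x => ENNReal.ofReal |f x|)) :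
    ∀ᵐ x ∂(volume : Measure (Fin n → ℝ)), c₁ ≤ t₁ x ∧ t₁ x ≤ c₂ := by
  obtain ⟨w, wm, hw⟩ : ∃ w, Measurable w ∧ t₁ =ᵐ[volume] w :=
    ⟨hmeas.mk t₁, hmeas.measurable_mk, hmeas.ae_eq_mk⟩
  -- upper claim
  have claim_up : ∀ (b : ℝ) (S : Set (Fin n → ℝ)), MeasurableSet S → volume S ≠ ∞ →
      c₂ < b → (∀ᵐ x ∂(volume : Measure (Fin n → ℝ)), x ∈ S → b ≤ t₁ x) →
      volume S = 0 := by
    intro b S hSm hSt hb hmem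
    by_contra hS0
    set f := S.indicator (fun _ => (1:ℝ)) with hfdef
    set V := volume S ^ (1 / p) with hVdef
    have hV0 : V ≠ 0 := by
      simp only [hVdef, ne_eq, ENNReal.rpow_eq_zero_iff]
      push_neg
      constructor
      · intro h; exact absurd h hS0
      · intro h; exact absurd h hSt
    have hVt : V ≠ ∞ := by
      simp only [hVdef, ne_eq, ENNReal.rpow_eq_top_iff]
      push_neg
      constructor
      · intro h; exact absurd h hS0
      · intro h; exact absurd h hSt
    have hf : nLp p (fun x => ENNReal.ofReal |f x|) = V := nLp_indicator hp hSm
    have low : ENNReal.ofReal b * V ≤ nLp p (fun x => ENNReal.ofReal (|f x| * t₁ x)) := by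
      rw [← hf, ← nLp_const_mul hp _ ENNReal.ofReal_ne_top]
      apply nLp_mono hp
      filter_upwards [hmem] with x hx
      by_cases hxS : x ∈ S
      · simp only [hfdef, Set.indicator_of_mem hxS, abs_one, one_mul, mul_one,
          ENNReal.ofReal_one]
        exact ENNReal.ofReal_le_ofReal (hx hxS)
      · simp [hfdef, Set.indicator_of_notMem hxS]
    have hi : ENNReal.ofReal b * V ≤ ENNReal.ofReal c₂ * V := by
      calc ENNReal.ofReal b * V ≤ nLp p (fun x => ENNReal.ofReal (|f x| * t₁ x)) := low
        _ ≤ ENNReal.ofReal c₂ * nLp p (fun x => ENNReal.ofReal |f x|) := (H f).2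
        _ = ENNReal.ofReal c₂ * V := by rw [hf]
    have := (ENNReal.mul_le_mul_iff_left hV0 hVt).mp hi
    have : b ≤ c₂ := (ENNReal.ofReal_le_ofReal_iff hc₂.le).mp this
    exact absurd this (not_le.mpr hb)
  -- lower claim
  have claim_lo : ∀ (q : ℝ) (S : Set (Fin n → ℝ)), MeasurableSet S → volume S ≠ ∞ →
      q < c₁ → (∀ᵐ x ∂(volume : Measure (Fin n → ℝ)), x ∈ S → 0 ≤ t₁ x ∧ t₁ x ≤ q) →
      volume S = 0 := by
    intro q S hSm hSt hq hmem
    by_contra hS0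
    set f := S.indicator (fun _ => (1:ℝ)) with hfdef
    set V := volume S ^ (1 / p) with hVdef
    have hV0 : V ≠ 0 := by
      simp only [hVdef, ne_eq, ENNReal.rpow_eq_zero_iff]
      push_neg
      exact ⟨fun h => absurd h hS0, fun h => absurd h hSt⟩
    have hVt : V ≠ ∞ := by
      simp only [hVdef, ne_eq, ENNReal.rpow_eq_top_iff]
      push_neg
      exact ⟨fun h => absurd h hS0, fun h => absurd h hSt⟩
    have hf : nLp p (fun x => ENNReal.ofReal |f x|) = V := nLp_indicator hp hSm
    have up : nLp p (fun x => ENNReal.ofReal (|f x| * t₁ x)) ≤ ENNReal.ofReal q * V := by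
      rw [← hf, ← nLp_const_mul hp _ ENNReal.ofReal_ne_top]
      apply nLp_mono hp
      filter_upwards [hmem] with x hx
      by_cases hxS : x ∈ S
      · simp only [hfdef, Set.indicator_of_mem hxS, abs_one, one_mul, mul_one,
          ENNReal.ofReal_one]
        exact ENNReal.ofReal_le_ofReal (hx hxS).2
      · simp [hfdef, Set.indicator_of_notMem hxS]
    have hi : ENNReal.ofReal c₁ * V ≤ ENNReal.ofReal q * V := by
      calc ENNReal.ofReal c₁ * V = ENNReal.ofReal c₁ * nLp p (fun x => ENNReal.ofReal |f x|) := by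
            rw [hf]
        _ ≤ nLp p (fun x => ENNReal.ofReal (|f x| * t₁ x)) := (H f).1
        _ ≤ ENNReal.ofReal q * V := up
    have h2 := (ENNReal.mul_le_mul_iff_left hV0 hVt).mp hi
    rcases le_or_gt q 0 with hq0 | hq0
    · have : ENNReal.ofReal c₁ = 0 := le_antisymm (by
        calc ENNReal.ofReal c₁ ≤ ENNReal.ofReal q := h2
          _ = 0 := by simp [ENNReal.ofReal_eq_zero.mpr hq0]) zero_le
      rw [ENNReal.ofReal_eq_zero] at this
      linarith
    · have : c₁ ≤ q := (ENNReal.ofReal_le_ofReal_iff hq0.le).mp h2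
      linarith
  -- assemble upper bound
  have up_null : volume {x : Fin n → ℝ | c₂ < w x} = 0 := by
    have hsub : {x : Fin n → ℝ | c₂ < w x} ⊆
        ⋃ (k : ℕ) (R : ℕ), ({x | c₂ + ((k:ℝ)+1)⁻¹ ≤ w x} ∩ Metric.ball 0 (R:ℝ)) := by
      intro x hx
      simp only [Set.mem_setOf_eq] at hx
      obtain ⟨k, hk⟩ := exists_nat_one_div_lt (sub_pos.mpr hx)
      obtain ⟨R, hR⟩ := exists_nat_gt ‖x‖
      refine Set.mem_iUnion.mpr ⟨k, Set.mem_iUnion.mpr ⟨R, ?_, ?_⟩⟩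
      · rw [one_div] at hk
        simp only [Set.mem_setOf_eq]
        linarith
      · simpa [Metric.mem_ball, dist_zero_right] using hR
    refine measure_mono_null hsub (measure_iUnion_null fun k => measure_iUnion_null fun R => ?_)
    refine claim_up (c₂ + ((k:ℝ)+1)⁻¹) _
      ((wm measurableSet_Ici).inter measurableSet_ball) ?_ ?_ ?_
    · exact ne_of_lt (lt_of_le_of_lt (measure_mono Set.inter_subset_right) measure_ball_lt_top)
    · have : (0:ℝ) < ((k:ℝ)+1)⁻¹ := by positivity
      linarith
    · filter_upwards [hw] with x hxw hxS
      rw [hxw]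
      exact hxS.1
  -- assemble lower bound
  have lo_null : volume {x : Fin n → ℝ | 0 < w x ∧ w x < c₁} = 0 := by
    have hsub : {x : Fin n → ℝ | 0 < w x ∧ w x < c₁} ⊆
        ⋃ (k : ℕ) (R : ℕ),
          ({x | 0 < w x ∧ w x ≤ c₁ - ((k:ℝ)+1)⁻¹} ∩ Metric.ball 0 (R:ℝ)) := by
      intro x hx
      simp only [Set.mem_setOf_eq] at hx
      obtain ⟨k, hk⟩ := exists_nat_one_div_lt (sub_pos.mpr hx.2)
      obtain ⟨R, hR⟩ := exists_nat_gt ‖x‖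
      refine Set.mem_iUnion.mpr ⟨k, Set.mem_iUnion.mpr ⟨R, ⟨hx.1, ?_⟩, ?_⟩⟩
      · rw [one_div] at hk
        linarith
      · simpa [Metric.mem_ball, dist_zero_right] using hR
    refine measure_mono_null hsub (measure_iUnion_null fun k => measure_iUnion_null fun R => ?_)
    refine claim_lo (c₁ - ((k:ℝ)+1)⁻¹) _ ?_ ?_ ?_ ?_
    · refine MeasurableSet.inter ?_ measurableSet_ball
      rw [Set.setOf_and]
      exact (wm measurableSet_Ioi).inter (wm measurableSet_Iic)
    · exact ne_of_lt (lt_of_le_of_lt (measure_mono Set.inter_subset_right) measure_ball_lt_top)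
    · have : (0:ℝ) < ((k:ℝ)+1)⁻¹ := by positivity
      linarith
    · filter_upwards [hw] with x hxw hxS
      rw [hxw]
      exact ⟨(hxS.1.1).le, hxS.1.2⟩
  have h_up : ∀ᵐ x ∂(volume : Measure (Fin n → ℝ)), w x ≤ c₂ := by
    rw [ae_iff]
    convert up_null using 2
    ext x
    simp
  have h_lo : ∀ᵐ x ∂(volume : Measure (Fin n → ℝ)), ¬ (0 < w x ∧ w x < c₁) := by
    rw [ae_iff]
    convert lo_null using 2
    ext x
    simp
  filter_upwards [hw, hpos, h_up, h_lo] with x hxw hxpos hxu hxl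
  rw [hxw] at hxpos ⊢
  refine ⟨?_, hxu⟩
  by_contra hcon
  exact hxl ⟨hxpos, not_le.mp hcon⟩

end NormEquiv

section Differentiation
variable {n : ℕ}

open Metric Filter

/-- Any closed ball is covered by `3^n` dyadic cubes whose side is between `r` and `2r`,
leading to a bound on averages over balls from bounds on dyadic averages. -/
lemma ball_lintegral_bound {s C : ℝ} (hs : 0 < s) (hC : 0 < C)
    {w : (Fin n → ℝ) → ℝ} (wm : Measurable w)
    (hbound : ∀ (v : ℤ) (m : Fin n → ℤ),
      (∫⁻ x in DyadicCube v m, ENNReal.ofReal |w x| ^ s) ≤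
        ENNReal.ofReal C ^ s * volume (DyadicCube v m))
    (x : Fin n → ℝ) {r : ℝ} (hr : 0 < r) :
    (∫⁻ y in closedBall x r, ENNReal.ofReal |w y| ^ s) ≤
      (3:ℝ≥0∞) ^ n * ENNReal.ofReal C ^ s * volume (closedBall x r) := by
  obtain ⟨k, hk⟩ := exists_mem_Ico_zpow hr one_lt_two
  obtain ⟨v, sv, hsveq, hsv0, hrsv, hsv2r⟩ :
      ∃ (v : ℤ) (sv : ℝ), (2:ℝ) ^ (-v) = sv ∧ 0 < sv ∧ r < sv ∧ sv ≤ 2 * r := by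
    refine ⟨-(k + 1), 2 ^ (k + 1), by rw [neg_neg], by positivity, hk.2, ?_⟩
    rw [zpow_add_one₀ two_ne_zero]
    nlinarith [hk.1]
  set G : (Fin n → ℝ) → ℝ≥0∞ := fun y => ENNReal.ofReal |w y| ^ s with hG
  have hGm : Measurable G := (ENNReal.measurable_ofReal.comp wm.abs).pow measurable_const
  set ν : Measure (Fin n → ℝ) := volume.withDensity G with hν
  have hνapp : ∀ A : Set (Fin n → ℝ), MeasurableSet A → ν A = ∫⁻ y in A, G y :=
    fun A hA => withDensity_apply G hA
  set b : Fin n → ℤ := fun i => ⌊(x i - r) / sv⌋ with hb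
  -- the covering
  have hcover : closedBall x r ⊆ ⋃ m ∈ Finset.Icc b (b + 2), DyadicCube v m := by
    intro y hy
    have hyi : ∀ i, |y i - x i| ≤ r := by
      intro i
      have h1 : dist y x ≤ r := mem_closedBall.mp hy
      have h2 := (dist_pi_le_iff hr.le).mp h1 i
      rwa [Real.dist_eq] at h2
    set m : Fin n → ℤ := fun i => ⌊y i / sv⌋ with hm
    have hmem : y ∈ DyadicCube v m := by
      intro i
      rw [hsveq]
      constructor
      · have h1 : ((m i : ℝ)) ≤ y i / sv := Int.floor_le _
        calc (m i : ℝ) * sv ≤ (y i / sv) * sv := by nlinarith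
          _ = y i := by field_simp
      · have h1 : y i / sv < (m i : ℝ) + 1 := Int.lt_floor_add_one _
        calc y i = (y i / sv) * sv := by field_simp
          _ < ((m i : ℝ) + 1) * sv := by nlinarith
    have hmF : m ∈ Finset.Icc b (b + 2) := by
      rw [Finset.mem_Icc]
      constructor
      · intro i
        refine Int.floor_mono ?_
        have h1 : x i - r ≤ y i := by
          have := abs_le.mp (hyi i)
          linarith [this.1]
        gcongr
      · intro i
        have hy2 : y i ≤ x i - r + 2 * sv := by
          have := abs_le.mp (hyi i)
          linarith [this.2]
        have h3 : y i / sv ≤ (x i - r) / sv + 2 := by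
          have h4 : y i / sv ≤ (x i - r + 2 * sv) / sv := by gcongr
          have h5 : (x i - r + 2 * sv) / sv = (x i - r) / sv + 2 := by field_simp
          linarith
        have h6 : (m i : ℤ) ≤ ⌊(x i - r) / sv + ((2:ℤ):ℝ)⌋ := by
          refine Int.floor_mono ?_
          push_cast
          exact h3
        rw [Int.floor_add_intCast] at h6
        simpa using h6
    exact Set.mem_biUnion hmF hmem
  have hcard : (Finset.Icc b (b + 2)).card = 3 ^ n := by
    rw [Pi.card_Icc]
    have h3 : ∀ i : Fin n, (Finset.Icc (b i) ((b + 2) i)).card = 3 := by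
      intro i
      rw [Int.card_Icc]
      have h : (b + 2) i = b i + 2 := rfl
      rw [h]
      omega
    rw [Finset.prod_congr rfl fun i _ => h3 i]
    simp
  have hvolQ : ∀ m : Fin n → ℤ, volume (DyadicCube v m) = ENNReal.ofReal sv ^ n := by
    intro m
    rw [volume_dyadic v m, hsveq]
  have hstep : ν (closedBall x r) ≤
      (3:ℝ≥0∞) ^ n * (ENNReal.ofReal C ^ s * ENNReal.ofReal sv ^ n) := by
    calc ν (closedBall x r)
        ≤ ν (⋃ m ∈ Finset.Icc b (b + 2), DyadicCube v m) := measure_mono hcover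
      _ ≤ ∑ m ∈ Finset.Icc b (b + 2), ν (DyadicCube v m) := measure_biUnion_finset_le _ _
      _ ≤ ∑ _m ∈ Finset.Icc b (b + 2), ENNReal.ofReal C ^ s * ENNReal.ofReal sv ^ n := by
          refine Finset.sum_le_sum fun m _ => ?_
          rw [hνapp _ (measurableSet_dyadic v m), ← hvolQ m]
          exact hbound v m
      _ = (3:ℝ≥0∞) ^ n * (ENNReal.ofReal C ^ s * ENNReal.ofReal sv ^ n) := by
          rw [Finset.sum_const, hcard, nsmul_eq_mul]
          push_cast
          ring
  have hvolB : volume (closedBall x r) = ENNReal.ofReal (2 * r) ^ n := by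
    rw [Real.volume_pi_closedBall x hr.le, ENNReal.ofReal_pow (by positivity)]
    simp
  have hfin : ENNReal.ofReal sv ^ n ≤ volume (closedBall x r) := by
    rw [hvolB]
    exact pow_le_pow_left' (ENNReal.ofReal_le_ofReal hsv2r) n
  have := hνapp (closedBall x r) measurableSet_closedBall
  calc (∫⁻ y in closedBall x r, ENNReal.ofReal |w y| ^ s)
      = ν (closedBall x r) := (hνapp _ measurableSet_closedBall).symm
    _ ≤ (3:ℝ≥0∞) ^ n * (ENNReal.ofReal C ^ s * ENNReal.ofReal sv ^ n) := hstep
    _ ≤ (3:ℝ≥0∞) ^ n * (ENNReal.ofReal C ^ s * volume (closedBall x r)) :=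
        mul_le_mul_right (mul_le_mul_right hfin _) _
    _ = (3:ℝ≥0∞) ^ n * ENNReal.ofReal C ^ s * volume (closedBall x r) := by ring

end Differentiation

section Diff2
variable {n : ℕ}
open Metric Filter Topology

lemma ae_le_of_dyadic_lintegral_le {s C : ℝ} (hs : 0 < s) (hC : 0 < C)
    {h : (Fin n → ℝ) → ℝ} (hmeas : AEMeasurable h (volume : Measure (Fin n → ℝ)))
    (hbound : ∀ (v : ℤ) (m : Fin n → ℤ),
      (∫⁻ x in DyadicCube v m, ENNReal.ofReal |h x| ^ s) ≤
        ENNReal.ofReal C ^ s * volume (DyadicCube v m)) :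
    ∀ᵐ x ∂(volume : Measure (Fin n → ℝ)), |h x| ≤ ((3:ℝ) ^ n * C ^ s) ^ (1/s) := by
  obtain ⟨w, wm, hw⟩ : ∃ w, Measurable w ∧ h =ᵐ[volume] w :=
    ⟨hmeas.mk h, hmeas.measurable_mk, hmeas.ae_eq_mk⟩
  have hbw : ∀ (v : ℤ) (m : Fin n → ℤ),
      (∫⁻ x in DyadicCube v m, ENNReal.ofReal |w x| ^ s) ≤
        ENNReal.ofReal C ^ s * volume (DyadicCube v m) := by
    intro v m
    have heq : (∫⁻ x in DyadicCube v m, ENNReal.ofReal |w x| ^ s)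
        = ∫⁻ x in DyadicCube v m, ENNReal.ofReal |h x| ^ s := by
      refine lintegral_congr_ae (ae_restrict_of_ae ?_)
      filter_upwards [hw] with x hx
      rw [hx]
    rw [heq]
    exact hbound v m
  set D : ℝ := (3:ℝ) ^ n * C ^ s with hD
  have hD0 : 0 < D := by positivity
  set f : (Fin n → ℝ) → ℝ := fun y => |w y| ^ s with hf
  have hf0 : ∀ y, 0 ≤ f y := fun y => Real.rpow_nonneg (abs_nonneg _) s
  have hfm : Measurable f := wm.abs.pow measurable_const
  have hofReal : ∀ y, ENNReal.ofReal (f y) = ENNReal.ofReal |w y| ^ s := fun y =>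
    (ENNReal.ofReal_rpow_of_nonneg (abs_nonneg _) hs.le).symm
  have hball : ∀ (x : Fin n → ℝ) (r : ℝ), 0 < r →
      (∫⁻ y in closedBall x r, ENNReal.ofReal (f y)) ≤
        ENNReal.ofReal D * volume (closedBall x r) := by
    intro x r hr
    calc (∫⁻ y in closedBall x r, ENNReal.ofReal (f y))
        = ∫⁻ y in closedBall x r, ENNReal.ofReal |w y| ^ s :=
          lintegral_congr fun y => hofReal y
      _ ≤ (3:ℝ≥0∞) ^ n * ENNReal.ofReal C ^ s * volume (closedBall x r) :=
          ball_lintegral_bound hs hC wm hbw x hr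
      _ = ENNReal.ofReal D * volume (closedBall x r) := by
          congr 1
          rw [hD, ENNReal.ofReal_mul (by positivity),
            ← ENNReal.ofReal_rpow_of_nonneg hC.le hs.le,
            ENNReal.ofReal_pow (by norm_num : (0:ℝ) ≤ 3)]
          norm_num
  have hloc : LocallyIntegrable f volume := by
    rw [locallyIntegrable_iff]
    intro K hK
    obtain ⟨R, hR⟩ := hK.isBounded.subset_closedBall 0
    have hR' : K ⊆ closedBall 0 (max R 1) :=
      hR.trans (closedBall_subset_closedBall (le_max_left _ _))
    have hmax : (0:ℝ) < max R 1 := lt_of_lt_of_le zero_lt_one (le_max_right _ _)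
    refine IntegrableOn.mono_set ?_ hR'
    constructor
    · exact hfm.aestronglyMeasurable
    · rw [hasFiniteIntegral_iff_ofReal (Eventually.of_forall hf0)]
      refine lt_of_le_of_lt (hball 0 (max R 1) hmax) ?_
      exact ENNReal.mul_lt_top ENNReal.ofReal_lt_top measure_closedBall_lt_top
  have havg := IsUnifLocDoublingMeasure.ae_tendsto_average
    (μ := (volume : Measure (Fin n → ℝ))) hloc 1
  filter_upwards [havg, hw] with x hx hxw
  have htend : Tendsto (fun r : ℝ => ⨍ y in closedBall x r, f y) (𝓝[>] 0) (𝓝 (f x)) := by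
    refine hx (fun _ : ℝ => x) (fun r => r) tendsto_id ?_
    filter_upwards [self_mem_nhdsWithin] with r hr
    exact mem_closedBall_self (by rw [one_mul]; exact le_of_lt hr)
  have hbnd : ∀ᶠ r in 𝓝[>] (0:ℝ), (⨍ y in closedBall x r, f y) ≤ D := by
    filter_upwards [self_mem_nhdsWithin] with r hr
    have hr0 : (0:ℝ) < r := hr
    have hvol0 : volume (closedBall x r) ≠ 0 := (measure_closedBall_pos volume x hr0).ne'
    have hvolt : volume (closedBall x r) ≠ ∞ := measure_closedBall_lt_top.ne
    have hpos : 0 < (volume (closedBall x r)).toReal := ENNReal.toReal_pos hvol0 hvolt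
    rw [setAverage_eq, smul_eq_mul]
    have hint : ∫ y in closedBall x r, f y ≤ D * (volume (closedBall x r)).toReal := by
      have h2 : ∫ y in closedBall x r, f y
          = (∫⁻ y in closedBall x r, ENNReal.ofReal (f y)).toReal := by
        rw [integral_eq_lintegral_of_nonneg_ae (Eventually.of_forall hf0)
          hfm.aestronglyMeasurable]
      rw [h2]
      calc (∫⁻ y in closedBall x r, ENNReal.ofReal (f y)).toReal
          ≤ (ENNReal.ofReal D * volume (closedBall x r)).toReal :=
            ENNReal.toReal_mono
              (ENNReal.mul_lt_top ENNReal.ofReal_lt_top measure_closedBall_lt_top).ne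
              (hball x r hr0)
        _ = D * (volume (closedBall x r)).toReal := by
            rw [ENNReal.toReal_mul, ENNReal.toReal_ofReal hD0.le]
    calc (volume (closedBall x r)).toReal⁻¹ * ∫ y in closedBall x r, f y
        ≤ (volume (closedBall x r)).toReal⁻¹ * (D * (volume (closedBall x r)).toReal) := by
          gcongr
      _ = D := by field_simp
  have hfxD : f x ≤ D := le_of_tendsto htend hbnd
  rw [hxw]
  calc |w x| = (|w x| ^ s) ^ (1/s) := by
        rw [← Real.rpow_mul (abs_nonneg _), mul_one_div, div_self hs.ne', Real.rpow_one]
    _ ≤ D ^ (1/s) := Real.rpow_le_rpow (hf0 x) hfxD (by positivity)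

end Diff2

lemma sigma1_ofReal {θ p : ℝ} (hθ : 0 < θ) (hθp : θ < p) :
    sigma1 (ENNReal.ofReal θ) (ENNReal.ofReal p) =
      ENNReal.ofReal (θ * ((p / θ) / (p / θ - 1))) := by
  unfold sigma1 conjE
  have h1 : (1:ℝ) < p / θ := (one_lt_div hθ).mpr hθp
  have hdiv : ENNReal.ofReal p / ENNReal.ofReal θ = ENNReal.ofReal (p / θ) :=
    (ENNReal.ofReal_div_of_pos hθ).symm
  rw [hdiv, if_neg (by simp only [ne_eq, ENNReal.ofReal_eq_one]; intro hh; rw [hh] at h1; linarith),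
    if_neg ENNReal.ofReal_ne_top,
    ENNReal.toReal_ofReal (by positivity), ← ENNReal.ofReal_mul hθ.le]

/-- For `max(1,θ) < p < ∞`, `σ₁ = θ(p/θ)'` and a weight with
`t₁^p ∈ A_{p/θ}(ℝ^n)`, one has `L_p(ℝ^n) = L_p(ℝ^n,t₁)` with equivalent norms iff
`M_{Q,σ₁}(t₁⁻¹) ≈ M_{Q,p}(t₁) ≈ 1` uniformly over all dyadic cubes `Q`. -/
theorem statement16 {n : ℕ} (θ p : ℝ) (hθ : 0 < θ) (hp : max 1 θ < p)
    (t₁ : (Fin n → ℝ) → ℝ) (hw₁ : IsWeight t₁)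
    (hA₁ : Muckenhoupt (p / θ) (fun x => t₁ x ^ p)) :
    (∃ c₁ c₂ : ℝ, 0 < c₁ ∧ 0 < c₂ ∧ ∀ f : (Fin n → ℝ) → ℝ,
        ENNReal.ofReal c₁ * nLp p (fun x => ENNReal.ofReal |f x|) ≤
            nLp p (fun x => ENNReal.ofReal (|f x| * t₁ x)) ∧
          nLp p (fun x => ENNReal.ofReal (|f x| * t₁ x)) ≤
            ENNReal.ofReal c₂ * nLp p (fun x => ENNReal.ofReal |f x|)) ↔
      (∃ c C : ℝ, 0 < c ∧ 0 < C ∧ ∀ (v : ℤ) (m : Fin n → ℤ),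
        (ENNReal.ofReal c ≤ MQ (sigma1 (ENNReal.ofReal θ) (ENNReal.ofReal p))
            (DyadicCube v m) (fun x => (t₁ x)⁻¹) ∧
          MQ (sigma1 (ENNReal.ofReal θ) (ENNReal.ofReal p))
            (DyadicCube v m) (fun x => (t₁ x)⁻¹) ≤ ENNReal.ofReal C) ∧
        (ENNReal.ofReal c ≤ MQ (ENNReal.ofReal p) (DyadicCube v m) t₁ ∧
          MQ (ENNReal.ofReal p) (DyadicCube v m) t₁ ≤ ENNReal.ofReal C)) := by
  have hp1 : (1:ℝ) < p := lt_of_le_of_lt (le_max_left _ _) hp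
  have hθp : θ < p := lt_of_le_of_lt (le_max_right _ _) hp
  have hp0 : (0:ℝ) < p := lt_trans zero_lt_one hp1
  set σr : ℝ := θ * ((p / θ) / (p / θ - 1)) with hσr
  have h1θ : (1:ℝ) < p / θ := (one_lt_div hθ).mpr hθp
  have hσr0 : 0 < σr := by
    rw [hσr]
    have h2 : 0 < p / θ - 1 := by linarith
    positivity
  have hσeq : sigma1 (ENNReal.ofReal θ) (ENNReal.ofReal p) = ENNReal.ofReal σr :=
    sigma1_ofReal hθ hθp
  have hσne : sigma1 (ENNReal.ofReal θ) (ENNReal.ofReal p) ≠ ∞ := by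
    rw [hσeq]; exact ENNReal.ofReal_ne_top
  have hσtoReal : (sigma1 (ENNReal.ofReal θ) (ENNReal.ofReal p)).toReal = σr := by
    rw [hσeq, ENNReal.toReal_ofReal hσr0.le]
  have hσpos : 0 < (sigma1 (ENNReal.ofReal θ) (ENNReal.ofReal p)).toReal := by
    rw [hσtoReal]; exact hσr0
  have hpne : (ENNReal.ofReal p) ≠ ∞ := ENNReal.ofReal_ne_top
  have hptoReal : (ENNReal.ofReal p).toReal = p := ENNReal.toReal_ofReal hp0.le
  have hppos : 0 < (ENNReal.ofReal p).toReal := by rw [hptoReal]; exact hp0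
  have hmeas : AEMeasurable t₁ (volume : Measure (Fin n → ℝ)) :=
    hw₁.1.aestronglyMeasurable.aemeasurable
  have hpos := hw₁.2.2
  have h0 := hw₁.2.1
  constructor
  · rintro ⟨c₁, c₂, hc₁, hc₂, H⟩
    have hbd := ae_bounds_of_norm_equiv hp0 hmeas hpos hc₁ hc₂ H
    have hc₁₂ : c₁ ≤ c₂ := by
      obtain ⟨x, hx⟩ := hbd.exists
      linarith [hx.1, hx.2]
    refine ⟨min c₁ c₂⁻¹, max c₂ c₁⁻¹, lt_min hc₁ (by positivity), lt_of_lt_of_le hc₂ (le_max_left _ _), ?_⟩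
    intro v m
    have hQ0 : volume (DyadicCube v m) ≠ 0 := (volume_dyadic_pos v m).ne'
    have hQt : volume (DyadicCube v m) ≠ ∞ := volume_dyadic_ne_top v m
    have hinv_bd : ∀ᵐ x ∂(volume : Measure (Fin n → ℝ)),
        c₂⁻¹ ≤ |(t₁ x)⁻¹| ∧ |(t₁ x)⁻¹| ≤ c₁⁻¹ := by
      filter_upwards [hbd, hpos] with x hx hxp
      have hinv : |(t₁ x)⁻¹| = (t₁ x)⁻¹ := abs_of_pos (by positivity)
      rw [hinv]
      constructor
      · exact inv_anti₀ hxp hx.2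
      · exact inv_anti₀ hc₁ hx.1
    have ht_bd : ∀ᵐ x ∂(volume : Measure (Fin n → ℝ)),
        c₁ ≤ |t₁ x| ∧ |t₁ x| ≤ c₂ := by
      filter_upwards [hbd, hpos] with x hx hxp
      rw [abs_of_pos hxp]
      exact hx
    refine ⟨⟨?_, ?_⟩, ?_, ?_⟩
    · refine le_MQ_of_ae_le hσne hσpos hQ0 hQt (le_min hc₁.le (by positivity)) ?_
      filter_upwards [hinv_bd] with x hx
      exact le_trans (min_le_right _ _) hx.1
    · refine MQ_le_of_ae_le hσne hσpos hQ0 hQt ?_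
      filter_upwards [hinv_bd] with x hx
      exact le_trans hx.2 (le_max_right _ _)
    · refine le_MQ_of_ae_le hpne hppos hQ0 hQt (le_min hc₁.le (by positivity)) ?_
      filter_upwards [ht_bd] with x hx
      exact le_trans (min_le_left _ _) hx.1
    · refine MQ_le_of_ae_le hpne hppos hQ0 hQt ?_
      filter_upwards [ht_bd] with x hx
      exact le_trans hx.2 (le_max_left _ _)
  · rintro ⟨c, C, hc, hC, H⟩
    -- upper bound for t₁
    have ht_int : ∀ (v : ℤ) (m : Fin n → ℤ),
        (∫⁻ x in DyadicCube v m, ENNReal.ofReal |t₁ x| ^ p) ≤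
          ENNReal.ofReal C ^ p * volume (DyadicCube v m) := by
      intro v m
      have := lintegral_le_of_MQ_le hpne hppos (volume_dyadic_pos v m).ne'
        (volume_dyadic_ne_top v m) (H v m).2.2
      rwa [hptoReal] at this
    have hinv_int : ∀ (v : ℤ) (m : Fin n → ℤ),
        (∫⁻ x in DyadicCube v m, ENNReal.ofReal |(t₁ x)⁻¹| ^ σr) ≤
          ENNReal.ofReal C ^ σr * volume (DyadicCube v m) := by
      intro v m
      have := lintegral_le_of_MQ_le hσne hσpos (volume_dyadic_pos v m).ne'
        (volume_dyadic_ne_top v m) (H v m).1.2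
      rwa [hσtoReal] at this
    have ht_up := ae_le_of_dyadic_lintegral_le hp0 hC hmeas ht_int
    have hinv_up := ae_le_of_dyadic_lintegral_le hσr0 hC hmeas.inv hinv_int
    set B₂ : ℝ := ((3:ℝ) ^ n * C ^ p) ^ (1 / p) with hB₂
    set B₁ : ℝ := ((3:ℝ) ^ n * C ^ σr) ^ (1 / σr) with hB₁
    have hB₁0 : 0 < B₁ := by rw [hB₁]; positivity
    have hB₂0 : 0 < B₂ := by rw [hB₂]; positivity
    have hbd : ∀ᵐ x ∂(volume : Measure (Fin n → ℝ)), B₁⁻¹ ≤ t₁ x ∧ t₁ x ≤ B₂ := by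
      filter_upwards [ht_up, hinv_up, hpos] with x hx2 hx1 hxp
      constructor
      · have h3 : (t₁ x)⁻¹ ≤ B₁ := by
          rw [Pi.inv_apply, abs_of_pos (by positivity : (0:ℝ) < (t₁ x)⁻¹)] at hx1
          exact hx1
        rw [← inv_inv (t₁ x)]
        exact inv_anti₀ (by positivity) h3
      · rw [abs_of_pos hxp] at hx2
        exact hx2
    exact ⟨B₁⁻¹, B₂, by positivity, hB₂0,
      norm_equiv_of_ae_bounds hp0 (by positivity) hbd⟩

end GeneralWeights
end
end
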